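/- arXiv:2003.12951 — 3 statements merged into one kernel-verified Lean document; each statement's English description precedes it below -/
import Mathlib

section
/- There exist constants c > 0 and m₀ ≥ 1, depending only on μ, such that for all integers m, n with m₀ < m ≤ n and every real number k, one has |∫_{2X_n}^{∞} ⟨x⟩^μ e^{ikx} h_m(x) h_n(x) dx| ≤ e^{-c n}. -/
open Real MeasureTheory intervalIntegral

/-- Physicists' Hermite polynomials, as functions on `ℝ`. -/
noncomputable def physHermite : ℕ → ℝ → ℝ
  | 0, _ => 1
  | 1, x => 2 * x
  | n + 2, x => 2 * x * physHermite (n + 1) x - 2 * ((n : ℝ) + 1) * physHermite n x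

/-- The `j`-th Hermite function (for `j ≥ 1`), the `L²`-normalized eigenfunction of
`-d²/dx² + x²` with eigenvalue `2j - 1`. -/
noncomputable def hermiteFun (j : ℕ) (x : ℝ) : ℝ :=
  ((2 : ℝ) ^ (j - 1) * (Nat.factorial (j - 1) : ℝ) * Real.sqrt Real.pi) ^ (-(1 : ℝ) / 2) *
    Real.exp (-x ^ 2 / 2) * physHermite (j - 1) x

/-- The turning point `X_j = √(2j - 1)`. -/
noncomputable def Xpt (j : ℕ) : ℝ := Real.sqrt (2 * (j : ℝ) - 1)

/-- The oscillatory integrand `⟨x⟩^μ e^{ikx} h_m(x) h_n(x)`. -/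
noncomputable def osc (μ k : ℝ) (m n : ℕ) (x : ℝ) : ℂ :=
  (Real.sqrt (1 + x ^ 2) ^ μ : ℝ) * Complex.exp (Complex.I * k * x) *
    (hermiteFun m x : ℂ) * (hermiteFun n x : ℂ)

/-!
For `x ≥ 2 X_n` we have `x² ≥ 8(n - 1)`, and in that range the three-term recurrence gives
`|H_j(x)| ≤ (3|x|)^j`, so `h_j(x)² ≤ (9x²)^{j-1} / (j-1)! · e^{-x²}`. Comparing with one term of
the exponential series, `(9y)^J / J! ≤ 18^J e^{y/2} ≤ e^{7y/8}` for `y ≥ 8J`, hence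
`h_j(x)² ≤ e^{-x²/8}`. The weight `⟨x⟩^μ ≤ e^x` is harmless, so for `x ≥ 32` the integrand is
at most `e^{-x²/16} e^{-x}`, and integrating over `x > 2X_n` gives `e^{-(2n-1)/4} ≤ e^{-n/4}`.
-/

theorem abs_physHermite_le : ∀ (j : ℕ) {x : ℝ}, (j : ℝ) ≤ x ^ 2 →
    |physHermite j x| ≤ (3 * |x|) ^ j
  | 0, x, _ => by simp [physHermite]
  | 1, x, _ => by
    rw [physHermite, abs_mul, abs_two, pow_one]
    linarith [abs_nonneg x]
  | j + 2, x, hj => by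
    push_cast at hj
    have ih₁ := abs_physHermite_le (j + 1) (x := x) (by push_cast; linarith)
    have ih₀ := abs_physHermite_le j (x := x) (by linarith)
    have hx : (j : ℝ) + 1 ≤ |x| ^ 2 := by rw [sq_abs]; linarith
    calc |physHermite (j + 2) x|
        ≤ 2 * |x| * |physHermite (j + 1) x| + 2 * ((j : ℝ) + 1) * |physHermite j x| := by
          rw [physHermite]
          refine (abs_sub _ _).trans_eq ?_
          rw [abs_mul, abs_mul, abs_mul, abs_two,
            abs_of_nonneg (by positivity : (0 : ℝ) ≤ 2 * ((j : ℝ) + 1))]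
      _ ≤ 2 * |x| * (3 * |x|) ^ (j + 1) + 2 * ((j : ℝ) + 1) * (3 * |x|) ^ j := by gcongr
      _ = (3 * |x|) ^ j * (6 * |x| ^ 2 + 2 * ((j : ℝ) + 1)) := by ring
      _ ≤ (3 * |x|) ^ j * (9 * |x| ^ 2) := by gcongr; linarith
      _ = (3 * |x|) ^ (j + 2) := by ring

theorem hermiteFun_sq_le (j : ℕ) {x : ℝ} (hj : ((j - 1 : ℕ) : ℝ) ≤ x ^ 2) :
    hermiteFun j x ^ 2 ≤ (9 * x ^ 2) ^ (j - 1) / (j - 1).factorial * exp (-x ^ 2) := by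
  set J := j - 1
  set A : ℝ := 2 ^ J * J.factorial * sqrt π
  have hA : (J.factorial : ℝ) ≤ A := by
    have h2 : (1 : ℝ) ≤ 2 ^ J := one_le_pow₀ one_le_two
    have hπ : (1 : ℝ) ≤ sqrt π := one_le_sqrt.mpr (by linarith [pi_gt_three])
    calc (J.factorial : ℝ) = 1 * J.factorial * 1 := by ring
      _ ≤ 2 ^ J * J.factorial * sqrt π := by gcongr
  have hnorm : (A ^ (-(1 : ℝ) / 2)) ^ 2 = A⁻¹ := by
    rw [← rpow_natCast, ← rpow_mul (by positivity)]
    norm_num [rpow_neg_one]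
  have hH : physHermite J x ^ 2 ≤ (9 * x ^ 2) ^ J := by
    calc physHermite J x ^ 2 = |physHermite J x| ^ 2 := (sq_abs _).symm
      _ ≤ ((3 * |x|) ^ J) ^ 2 := by gcongr; exact abs_physHermite_le J hj
      _ = (9 * x ^ 2) ^ J := by rw [← pow_mul, mul_comm J, pow_mul, mul_pow, sq_abs]; norm_num
  have hexp : exp (-x ^ 2 / 2) ^ 2 = exp (-x ^ 2) := by rw [← exp_nat_mul]; ring_nf
  calc hermiteFun j x ^ 2 = A⁻¹ * exp (-x ^ 2) * physHermite J x ^ 2 := by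
        rw [hermiteFun, mul_pow, mul_pow, hnorm, hexp]
    _ ≤ (J.factorial : ℝ)⁻¹ * exp (-x ^ 2) * (9 * x ^ 2) ^ J := by gcongr
    _ = (9 * x ^ 2) ^ J / J.factorial * exp (-x ^ 2) := by ring

theorem eighteen_le_exp_three : (18 : ℝ) ≤ exp 3 := by
  have h : (2.7182818283 : ℝ) ^ 3 ≤ exp 1 ^ 3 := by gcongr; exact exp_one_gt_d9.le
  rw [← exp_nat_mul] at h
  norm_num at h ⊢
  linarith

theorem nine_mul_pow_div_factorial_le_exp (J : ℕ) {y : ℝ} (hy : 8 * (J : ℝ) ≤ y) :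
    (9 * y) ^ J / J.factorial ≤ exp (7 * y / 8) := by
  have hy0 : 0 ≤ y := le_trans (by positivity) hy
  have h18 : (18 : ℝ) ^ J ≤ exp (3 * y / 8) :=
    calc (18 : ℝ) ^ J ≤ exp 3 ^ J := by gcongr; exact eighteen_le_exp_three
      _ = exp (3 * J) := by rw [← exp_nat_mul]; ring_nf
      _ ≤ exp (3 * y / 8) := by gcongr; linarith
  calc (9 * y) ^ J / J.factorial = 18 ^ J * ((y / 2) ^ J / J.factorial) := by
        rw [show 9 * y = 18 * (y / 2) by ring, mul_pow, mul_div_assoc]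
    _ ≤ exp (3 * y / 8) * exp (y / 2) := by
        gcongr
        exact pow_div_factorial_le_exp _ (by positivity) J
    _ = exp (7 * y / 8) := by rw [← exp_add]; ring_nf

theorem hermiteFun_sq_le_exp (j : ℕ) {x : ℝ} (hj : 8 * ((j - 1 : ℕ) : ℝ) ≤ x ^ 2) :
    hermiteFun j x ^ 2 ≤ exp (-x ^ 2 / 8) :=
  calc hermiteFun j x ^ 2 ≤ (9 * x ^ 2) ^ (j - 1) / (j - 1).factorial * exp (-x ^ 2) :=
        hermiteFun_sq_le j (by linarith [(j - 1).cast_nonneg (α := ℝ)])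
    _ ≤ exp (7 * x ^ 2 / 8) * exp (-x ^ 2) := by
        gcongr; exact nine_mul_pow_div_factorial_le_exp _ hj
    _ = exp (-x ^ 2 / 8) := by rw [← exp_add]; ring_nf

theorem abs_hermiteFun_mul_le_exp {m n : ℕ} (hmn : m ≤ n) {x : ℝ}
    (hn : 8 * ((n - 1 : ℕ) : ℝ) ≤ x ^ 2) :
    |hermiteFun m x * hermiteFun n x| ≤ exp (-x ^ 2 / 8) := by
  have hm : 8 * ((m - 1 : ℕ) : ℝ) ≤ x ^ 2 := le_trans (by gcongr) hn
  have hsq_m := hermiteFun_sq_le_exp m hm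
  have hsq_n := hermiteFun_sq_le_exp n hn
  rw [abs_mul]
  nlinarith [sq_abs (hermiteFun m x), sq_abs (hermiteFun n x),
    sq_nonneg (|hermiteFun m x| - |hermiteFun n x|)]

theorem sqrt_one_add_sq_rpow_le_exp {μ x : ℝ} (hμ : μ ≤ 1) (hx : 0 ≤ x) :
    sqrt (1 + x ^ 2) ^ μ ≤ exp x :=
  calc sqrt (1 + x ^ 2) ^ μ ≤ sqrt (1 + x ^ 2) ^ (1 : ℝ) :=
        rpow_le_rpow_of_exponent_le (one_le_sqrt.mpr (by nlinarith)) hμ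
    _ ≤ 1 + x := by
        rw [rpow_one, sqrt_le_left (by linarith)]
        nlinarith
    _ ≤ exp x := by linarith [add_one_le_exp x]

theorem norm_osc_le_exp {μ : ℝ} (hμ : μ ≤ 1) (k : ℝ) {m n : ℕ} (hmn : m ≤ n) {x : ℝ}
    (hx : 0 ≤ x) (hn : 8 * ((n - 1 : ℕ) : ℝ) ≤ x ^ 2) :
    ‖osc μ k m n x‖ ≤ exp (x - x ^ 2 / 8) := by
  have hphase : ‖Complex.exp (Complex.I * k * x)‖ = 1 := by
    rw [show Complex.I * k * x = ((k * x : ℝ) : ℂ) * Complex.I by push_cast; ring]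
    exact Complex.norm_exp_ofReal_mul_I _
  have hnorm : ‖osc μ k m n x‖ = sqrt (1 + x ^ 2) ^ μ * |hermiteFun m x * hermiteFun n x| := by
    simp only [osc, norm_mul, Complex.norm_real, Real.norm_eq_abs, hphase, abs_mul,
      abs_of_nonneg (rpow_nonneg (sqrt_nonneg _) μ)]
    ring
  rw [hnorm, sub_eq_add_neg, exp_add, ← neg_div]
  exact mul_le_mul (sqrt_one_add_sq_rpow_le_exp hμ hx) (abs_hermiteFun_mul_le_exp hmn hn)
    (abs_nonneg _) (exp_pos x).le

theorem norm_setIntegral_Ioi_le_of_norm_le_mul_exp_neg {E : Type*} [NormedAddCommGroup E]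
    [NormedSpace ℝ E] {f : ℝ → E} {a C : ℝ} (hf : ∀ x > a, ‖f x‖ ≤ C * exp (-x)) :
    ‖∫ x in Set.Ioi a, f x‖ ≤ C * exp (-a) := by
  have hint : IntegrableOn (fun x => C * exp (-x)) (Set.Ioi a) := by
    simpa [IntegrableOn] using (exp_neg_integrableOn_Ioi a one_pos).const_mul C
  calc ‖∫ x in Set.Ioi a, f x‖ ≤ ∫ x in Set.Ioi a, C * exp (-x) :=
        norm_integral_le_of_norm_le hint
          ((ae_restrict_mem measurableSet_Ioi).mono hf)
    _ = C * exp (-a) := by rw [MeasureTheory.integral_const_mul, integral_exp_neg_Ioi]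

theorem two_mul_Xpt_sq {n : ℕ} (hn : 1 ≤ n) : (2 * Xpt n) ^ 2 = 8 * n - 4 := by
  have : (1 : ℝ) ≤ n := by exact_mod_cast hn
  rw [Xpt, mul_pow, sq_sqrt (by linarith)]
  ring

theorem hermite_oscillatory_Ioi_two_Xn_general (μ : ℝ) (hμ1 : μ < 1 / 3) :
    ∃ c : ℝ, 0 < c ∧ ∃ m₀ : ℕ, 1 ≤ m₀ ∧ ∀ m n : ℕ, m₀ < m → m ≤ n → ∀ k : ℝ,
      ‖∫ x in Set.Ioi (2 * Xpt n), osc μ k m n x‖ ≤ Real.exp (-(c * n)) := by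
  refine ⟨1 / 4, by norm_num, 128, by norm_num, fun m n hm hmn k => ?_⟩
  have hn : (129 : ℝ) ≤ n := by exact_mod_cast hm.trans_le hmn
  set x₀ := 2 * Xpt n
  have hx₀_sq : x₀ ^ 2 = 8 * n - 4 := two_mul_Xpt_sq (by omega)
  have hx₀ : 32 ≤ x₀ := by
    nlinarith [show 0 ≤ x₀ from mul_nonneg zero_le_two (sqrt_nonneg _)]
  have hpointwise : ∀ x > x₀, ‖osc μ k m n x‖ ≤ exp (-x₀ ^ 2 / 16) * exp (-x) := by
    intro x hx
    have hn_x : 8 * ((n - 1 : ℕ) : ℝ) ≤ x ^ 2 := by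
      rw [Nat.cast_sub (by omega)]
      push_cast
      nlinarith
    refine (norm_osc_le_exp (by linarith) k hmn (by linarith) hn_x).trans ?_
    rw [← exp_add, exp_le_exp]
    nlinarith
  calc ‖∫ x in Set.Ioi x₀, osc μ k m n x‖ ≤ exp (-x₀ ^ 2 / 16) * exp (-x₀) :=
        norm_setIntegral_Ioi_le_of_norm_le_mul_exp_neg hpointwise
    _ ≤ exp (-(1 / 4 * n)) * 1 := by
        gcongr
        · rw [hx₀_sq]; linarith
        · exact exp_le_one_iff.mpr (by linarith)
    _ = exp (-(1 / 4 * n)) := mul_one _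

/-- exponential smallness of the oscillatory integral on `[2X_n, ∞)`. -/
theorem hermite_oscillatory_Ioi_two_Xn (μ : ℝ) (hμ0 : 0 ≤ μ) (hμ1 : μ < 1 / 3) :
    ∃ c : ℝ, 0 < c ∧ ∃ m₀ : ℕ, 1 ≤ m₀ ∧ ∀ m n : ℕ, m₀ < m → m ≤ n → ∀ k : ℝ,
      ‖∫ x in Set.Ioi (2 * Xpt n), osc μ k m n x‖ ≤ Real.exp (-(c * n)) :=
  hermite_oscillatory_Ioi_two_Xn_general μ hμ1
end

section
/- There exist constants C > 0 and m₀ ≥ 1, depending only on μ, such that for all integers m, n with m₀ < m ≤ n and X_n ≥ 2X_m, and every real number k ≠ 0, one has |∫_{0}^{X_m - X_m^{-1/3}} ⟨x⟩^μ e^{ikx} h_m(x) h_n(x) dx| ≤ C · (max(|k|, 1))^{1/2} · m^{-(1/8 - μ/4)} · n^{-(1/8 - μ/4)}. -/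
open Real MeasureTheory intervalIntegral

/-!
Write `λ_j = X_j²`. The energy `E_j = h_j'² + (λ_j - x²) h_j²` satisfies `E_j' = -2x h_j²`,
so for `x ≥ 0` it is at most `E_j(0) ≤ 4 X_j`; the value at `0` is controlled through the
recurrence `h_{j+2}(0)² = j/(j+1) h_j(0)²`. On `[0, X_m - X_m^{-1/3}]`, where `x ≤ X_n / 2`,
this gives `|h_m| ≤ 2 (X_m - x)^{-1/2}` and `|h_n| ≤ 4 X_n^{-1/2}`, and
`|h_m'|, |h_n'|` are bounded by `2 X_m^{1/2}, 2 X_n^{1/2}`.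

Integrating these bounds directly, the integral `I` satisfies `‖I‖ ≲ ⟨X_m⟩^μ (X_m / X_n)^{1/2}`.
On the other hand the Wronskian `W = h_m' h_n - h_m h_n'` satisfies `W' = (λ_n - λ_m) h_m h_n`,
so integrating by parts against the weight `⟨x⟩^μ e^{ikx}` gives
`λ_n ‖I‖ ≲ (1 + μ + |k|) ⟨X_m⟩^μ (X_m X_n)^{1/2}`.
The stated rate is the geometric mean of the two bounds.
-/

open Set

/-! ### Hermite functions and their energy -/

lemma physHermite_succ (p : ℕ) (x : ℝ) :
    physHermite (p + 1) x = 2 * x * physHermite p x - 2 * p * physHermite (p - 1) x := by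
  cases p with
  | zero => simp [physHermite]
  | succ q => simp only [physHermite]; push_cast; ring

lemma hasDerivAt_physHermite : ∀ (p : ℕ) (x : ℝ),
    HasDerivAt (physHermite p) (2 * p * physHermite (p - 1) x) x
  | 0, x => by simpa [physHermite] using hasDerivAt_const x (1 : ℝ)
  | 1, x => by simpa [physHermite] using (hasDerivAt_id x).const_mul (2 : ℝ)
  | q + 2, x => by
      have h := ((hasDerivAt_id' x).const_mul 2 |>.mul (hasDerivAt_physHermite (q + 1) x)).sub
        ((hasDerivAt_physHermite q x).const_mul (2 * ((q : ℝ) + 1)))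
      have hfun : physHermite (q + 2) =
          fun y => 2 * y * physHermite (q + 1) y - 2 * ((q : ℝ) + 1) * physHermite q y := rfl
      rw [hfun]
      refine h.congr_deriv ?_
      rw [show q + 2 - 1 = q + 1 from rfl, Nat.add_sub_cancel]
      push_cast
      linear_combination (-2 * (q : ℝ) - 2) * physHermite_succ q x

lemma hasDerivAt_exp_neg_sq_div_two (x : ℝ) :
    HasDerivAt (fun y : ℝ => Real.exp (-y ^ 2 / 2)) (-x * Real.exp (-x ^ 2 / 2)) x := by
  have h : HasDerivAt (fun y : ℝ => -y ^ 2 / 2) (-x) x :=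
    ((hasDerivAt_pow 2 x).neg.div_const 2).congr_deriv (by push_cast; ring)
  simpa [mul_comm] using h.exp

noncomputable def hermiteNorm (p : ℕ) : ℝ :=
  ((2 : ℝ) ^ p * (Nat.factorial p : ℝ) * Real.sqrt Real.pi) ^ (-(1 : ℝ) / 2)

lemma hermiteFun_succ (p : ℕ) (x : ℝ) :
    hermiteFun (p + 1) x = hermiteNorm p * Real.exp (-x ^ 2 / 2) * physHermite p x := rfl

lemma hermiteNorm_sq (p : ℕ) :
    hermiteNorm p ^ 2 = ((2 : ℝ) ^ p * (Nat.factorial p : ℝ) * Real.sqrt Real.pi)⁻¹ := by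
  rw [hermiteNorm, ← Real.rpow_natCast, ← Real.rpow_mul (by positivity)]
  norm_num [Real.rpow_neg_one]

lemma hermiteNorm_succ_sq (p : ℕ) :
    2 * ((p : ℝ) + 1) * hermiteNorm (p + 1) ^ 2 = hermiteNorm p ^ 2 := by
  rw [hermiteNorm_sq, hermiteNorm_sq, Nat.factorial_succ]
  have : (0 : ℝ) < Real.sqrt Real.pi := Real.sqrt_pos.2 Real.pi_pos
  field_simp
  push_cast; ring

lemma Xpt_sq {j : ℕ} (hj : 1 ≤ j) : Xpt j ^ 2 = 2 * j - 1 := by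
  have : (1 : ℝ) ≤ j := by exact_mod_cast hj
  exact Real.sq_sqrt (by linarith)

lemma Xpt_succ_sq (p : ℕ) : Xpt (p + 1) ^ 2 = 2 * p + 1 := by
  rw [Xpt_sq (Nat.le_add_left 1 p)]; push_cast; ring

lemma one_le_Xpt {j : ℕ} (hj : 1 ≤ j) : 1 ≤ Xpt j := by
  have : (1 : ℝ) ≤ j := by exact_mod_cast hj
  exact Real.one_le_sqrt.2 (by linarith)

lemma hasDerivAt_hermiteFun_succ (p : ℕ) (x : ℝ) :
    HasDerivAt (hermiteFun (p + 1)) (hermiteNorm p * Real.exp (-x ^ 2 / 2) *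
      (2 * p * physHermite (p - 1) x - x * physHermite p x)) x := by
  refine ((hasDerivAt_exp_neg_sq_div_two x).const_mul (hermiteNorm p) |>.mul
    (hasDerivAt_physHermite p x)).congr_deriv ?_
  ring

lemma deriv_hermiteFun_succ (p : ℕ) : deriv (hermiteFun (p + 1)) = fun x =>
    hermiteNorm p * Real.exp (-x ^ 2 / 2) * (2 * p * physHermite (p - 1) x - x * physHermite p x) :=
  funext fun x => (hasDerivAt_hermiteFun_succ p x).deriv

lemma hasDerivAt_hermiteFun {j : ℕ} (hj : 1 ≤ j) (x : ℝ) :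
    HasDerivAt (hermiteFun j) (deriv (hermiteFun j) x) x := by
  obtain ⟨p, rfl⟩ := Nat.exists_eq_add_of_le' hj
  exact (hasDerivAt_hermiteFun_succ p x).differentiableAt.hasDerivAt

lemma continuous_hermiteFun {j : ℕ} (hj : 1 ≤ j) : Continuous (hermiteFun j) :=
  continuous_iff_continuousAt.2 fun x => (hasDerivAt_hermiteFun hj x).continuousAt

lemma hasDerivAt_deriv_hermiteFun {j : ℕ} (hj : 1 ≤ j) (x : ℝ) :
    HasDerivAt (deriv (hermiteFun j)) ((x ^ 2 - Xpt j ^ 2) * hermiteFun j x) x := by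
  obtain ⟨p, rfl⟩ := Nat.exists_eq_add_of_le' hj
  have hpoly := ((hasDerivAt_physHermite (p - 1) x).const_mul (2 * (p : ℝ))).sub
    ((hasDerivAt_id' x).mul (hasDerivAt_physHermite p x))
  rw [deriv_hermiteFun_succ]
  refine ((hasDerivAt_exp_neg_sq_div_two x).const_mul (hermiteNorm p) |>.mul hpoly).congr_deriv ?_
  rw [Xpt_succ_sq, hermiteFun_succ]
  rcases p with _ | q
  · simp [physHermite]; ring
  · simp only [Pi.sub_apply, Pi.mul_apply, Nat.add_sub_cancel]
    push_cast
    linear_combination (2 * ((q : ℝ) + 1) * hermiteNorm (q + 1) * Real.exp (-x ^ 2 / 2)) *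
      physHermite_succ q x

noncomputable def hermiteEnergy (j : ℕ) (x : ℝ) : ℝ :=
  deriv (hermiteFun j) x ^ 2 + (Xpt j ^ 2 - x ^ 2) * hermiteFun j x ^ 2

lemma hasDerivAt_hermiteEnergy {j : ℕ} (hj : 1 ≤ j) (x : ℝ) :
    HasDerivAt (hermiteEnergy j) (-2 * x * hermiteFun j x ^ 2) x := by
  have h := ((hasDerivAt_deriv_hermiteFun hj x).pow 2).add
    (((hasDerivAt_pow 2 x).const_sub (Xpt j ^ 2)).mul ((hasDerivAt_hermiteFun hj x).pow 2))
  refine h.congr_deriv ?_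
  simp only [Pi.pow_apply]
  push_cast; ring

lemma antitoneOn_hermiteEnergy {j : ℕ} (hj : 1 ≤ j) : AntitoneOn (hermiteEnergy j) (Ici 0) := by
  refine antitoneOn_of_hasDerivWithinAt_nonpos (convex_Ici 0)
    (fun x _ => (hasDerivAt_hermiteEnergy hj x).continuousAt.continuousWithinAt)
    (fun x _ => (hasDerivAt_hermiteEnergy hj x).hasDerivWithinAt) fun x hx => ?_
  rw [interior_Ici] at hx
  have : 0 < x := hx
  nlinarith [sq_nonneg (hermiteFun j x)]

lemma hermiteFun_add_two_zero_sq {j : ℕ} (hj : 1 ≤ j) :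
    ((j : ℝ) + 1) * hermiteFun (j + 2) 0 ^ 2 = j * hermiteFun j 0 ^ 2 := by
  obtain ⟨p, rfl⟩ := Nat.exists_eq_add_of_le' hj
  have hnorm : 4 * ((p : ℝ) + 1) * ((p : ℝ) + 2) * hermiteNorm (p + 2) ^ 2 = hermiteNorm p ^ 2 := by
    rw [← hermiteNorm_succ_sq p, ← hermiteNorm_succ_sq (p + 1)]; push_cast; ring
  simp only [show p + 1 + 2 = p + 2 + 1 from rfl, hermiteFun_succ, physHermite]
  simp only [ne_eq, OfNat.ofNat_ne_zero, not_false_eq_true, zero_pow, neg_zero, zero_div,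
    Real.exp_zero, mul_zero, zero_mul, zero_sub]
  push_cast
  linear_combination (((p : ℝ) + 1) * physHermite p 0 ^ 2) * hnorm

lemma deriv_hermiteFun_succ_zero_sq (j : ℕ) :
    deriv (hermiteFun (j + 1)) 0 ^ 2 = 2 * j * hermiteFun j 0 ^ 2 := by
  rcases j with _ | p
  · simp [deriv_hermiteFun_succ]
  · rw [deriv_hermiteFun_succ, hermiteFun_succ]
    simp only [Nat.add_sub_cancel, ne_eq, OfNat.ofNat_ne_zero, not_false_eq_true, zero_pow,
      neg_zero, zero_div, Real.exp_zero, zero_mul, sub_zero, mul_one]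
    push_cast
    linear_combination (2 * ((p : ℝ) + 1) * physHermite p 0 ^ 2) * hermiteNorm_succ_sq p

/-- `h_j(0)²` is at most of order `j^{-1/2}`; in fourth powers the two-step recurrence
`(j + 1) h_{j+2}(0)² = j h_j(0)²` preserves the bound because `j² (j + 3) ≤ (j + 1)³`. -/
lemma hermiteFun_zero_pow_four_mul_le : ∀ {j : ℕ}, 1 ≤ j → hermiteFun j 0 ^ 4 * (j + 1) ≤ 2
  | 1, _ => by
      have h : hermiteFun 1 0 ^ 2 = (Real.sqrt Real.pi)⁻¹ := by
        simp [hermiteFun_succ, physHermite, hermiteNorm_sq 0]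
      have hπ : (Real.sqrt Real.pi)⁻¹ ≤ 1 :=
        inv_le_one_of_one_le₀ (Real.one_le_sqrt.2 (by linarith [Real.pi_gt_three]))
      rw [show hermiteFun 1 0 ^ 4 = (hermiteFun 1 0 ^ 2) ^ 2 by ring, h]
      push_cast
      nlinarith [inv_nonneg.2 (Real.sqrt_nonneg Real.pi)]
  | 2, _ => by simp [hermiteFun_succ, physHermite]
  | j + 3, _ => by
      have ih := hermiteFun_zero_pow_four_mul_le (j := j + 1) (by omega)
      have hrec := hermiteFun_add_two_zero_sq (j := j + 1) (by omega)
      push_cast at ih hrec ⊢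
      have hsq : ((j : ℝ) + 2) ^ 2 * hermiteFun (j + 3) 0 ^ 4 =
          ((j : ℝ) + 1) ^ 2 * hermiteFun (j + 1) 0 ^ 4 := by
        linear_combination (((j : ℝ) + 2) * hermiteFun (j + 3) 0 ^ 2 +
          ((j : ℝ) + 1) * hermiteFun (j + 1) 0 ^ 2) * hrec
      refine le_of_mul_le_mul_left (a := ((j : ℝ) + 2) ^ 2) ?_ (by positivity)
      nlinarith [mul_le_mul_of_nonneg_left ih (by positivity : (0 : ℝ) ≤ ((j : ℝ) + 2) ^ 2),
        mul_nonneg (pow_nonneg (sq_nonneg (hermiteFun (j + 1) 0)) 2)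
          (by positivity : (0 : ℝ) ≤ 3 * j + 4)]

lemma hermiteEnergy_zero_le {j : ℕ} (hj : 1 ≤ j) : hermiteEnergy j 0 ≤ 4 * Xpt j := by
  obtain ⟨i, rfl⟩ := Nat.exists_eq_add_of_le' hj
  have hX := Xpt_succ_sq i
  have hX0 : 0 ≤ Xpt (i + 1) := Real.sqrt_nonneg _
  have hi : (0 : ℝ) ≤ i := i.cast_nonneg
  have hderiv : 2 * i * hermiteFun i 0 ^ 2 ≤ 2 * Xpt (i + 1) := by
    rcases Nat.eq_zero_or_pos i with rfl | hi1
    · simpa using hX0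
    have h4 := hermiteFun_zero_pow_four_mul_le hi1
    refine le_of_sq_le_sq ?_ (by positivity)
    rw [mul_pow 2 (Xpt _), hX]
    nlinarith [mul_le_mul_of_nonneg_left h4 (by positivity : (0 : ℝ) ≤ 4 * i ^ 2),
      pow_nonneg (sq_nonneg (hermiteFun i 0)) 2]
  have hvalue : Xpt (i + 1) ^ 2 * hermiteFun (i + 1) 0 ^ 2 ≤ 2 * Xpt (i + 1) := by
    have h4 := hermiteFun_zero_pow_four_mul_le (j := i + 1) (by omega)
    push_cast at h4
    refine le_of_sq_le_sq ?_ (by positivity)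
    rw [mul_pow 2 (Xpt _), hX]
    nlinarith [mul_le_mul_of_nonneg_left h4 (by positivity : (0 : ℝ) ≤ (2 * i + 1) ^ 2),
      pow_nonneg (sq_nonneg (hermiteFun (i + 1) 0)) 2]
  rw [hermiteEnergy, deriv_hermiteFun_succ_zero_sq]
  linarith

lemma hermiteEnergy_le {j : ℕ} (hj : 1 ≤ j) {x : ℝ} (hx : 0 ≤ x) : hermiteEnergy j x ≤ 4 * Xpt j :=
  (antitoneOn_hermiteEnergy hj (mem_Ici.2 le_rfl) hx hx).trans (hermiteEnergy_zero_le hj)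

lemma sq_sub_sq_mul_hermiteFun_sq_le {j : ℕ} (hj : 1 ≤ j) {x : ℝ} (hx : 0 ≤ x) :
    (Xpt j ^ 2 - x ^ 2) * hermiteFun j x ^ 2 ≤ 4 * Xpt j := by
  have := hermiteEnergy_le hj hx
  rw [hermiteEnergy] at this
  nlinarith [sq_nonneg (deriv (hermiteFun j) x)]

lemma deriv_hermiteFun_sq_le {j : ℕ} (hj : 1 ≤ j) {x : ℝ} (hx : 0 ≤ x) (hxX : x ≤ Xpt j) :
    deriv (hermiteFun j) x ^ 2 ≤ 4 * Xpt j := by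
  have := hermiteEnergy_le hj hx
  rw [hermiteEnergy] at this
  nlinarith [mul_nonneg (sub_nonneg.2 (pow_le_pow_left₀ hx hxX 2)) (sq_nonneg (hermiteFun j x))]

lemma abs_le_mul_sqrt {a b c : ℝ} (hb : 0 ≤ b) (h : a ^ 2 ≤ b ^ 2 * c) : |a| ≤ b * Real.sqrt c := by
  rw [← Real.sqrt_sq_eq_abs, ← Real.sqrt_sq hb, ← Real.sqrt_mul (sq_nonneg b)]
  exact Real.sqrt_le_sqrt h

lemma abs_hermiteFun_le_inv_sqrt {j : ℕ} (hj : 1 ≤ j) {x : ℝ} (hx : 0 ≤ x) (hxX : x < Xpt j) :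
    |hermiteFun j x| ≤ 2 * (Real.sqrt (Xpt j - x))⁻¹ := by
  rw [← Real.sqrt_inv]
  refine abs_le_mul_sqrt zero_le_two ?_
  have hgap : 0 < Xpt j - x := sub_pos.2 hxX
  have hX := one_le_Xpt hj
  have := sq_sub_sq_mul_hermiteFun_sq_le hj hx
  rw [← div_eq_mul_inv, le_div_iff₀ hgap]
  have hfactor : Xpt j * ((Xpt j - x) * hermiteFun j x ^ 2) ≤ Xpt j * 2 ^ 2 := by
    nlinarith [mul_nonneg (mul_nonneg hx hgap.le) (sq_nonneg (hermiteFun j x))]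
  nlinarith [le_of_mul_le_mul_left hfactor (by linarith)]

lemma abs_deriv_hermiteFun_le {j : ℕ} (hj : 1 ≤ j) {x : ℝ} (hx : 0 ≤ x) (hxX : x ≤ Xpt j) :
    |deriv (hermiteFun j) x| ≤ 2 * Real.sqrt (Xpt j) :=
  abs_le_mul_sqrt zero_le_two (by linarith [deriv_hermiteFun_sq_le hj hx hxX])

lemma abs_hermiteFun_le_of_two_mul_le {j : ℕ} (hj : 1 ≤ j) {x : ℝ} (hx : 0 ≤ x)
    (h2x : 2 * x ≤ Xpt j) : |hermiteFun j x| ≤ 4 * (Real.sqrt (Xpt j))⁻¹ := by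
  rw [← Real.sqrt_inv]
  refine abs_le_mul_sqrt (by norm_num) ?_
  have hX := one_le_Xpt hj
  have := sq_sub_sq_mul_hermiteFun_sq_le hj hx
  rw [← div_eq_mul_inv, le_div_iff₀ (by linarith)]
  nlinarith [sq_nonneg (hermiteFun j x), mul_le_mul h2x h2x (by positivity) (by positivity)]

/-! ### Integration by parts against the weight -/

noncomputable def hermiteWronskian (j l : ℕ) (x : ℝ) : ℝ :=
  deriv (hermiteFun j) x * hermiteFun l x - hermiteFun j x * deriv (hermiteFun l) x

lemma hasDerivAt_hermiteWronskian {j l : ℕ} (hj : 1 ≤ j) (hl : 1 ≤ l) (x : ℝ) :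
    HasDerivAt (hermiteWronskian j l)
      ((Xpt l ^ 2 - Xpt j ^ 2) * (hermiteFun j x * hermiteFun l x)) x := by
  refine (((hasDerivAt_deriv_hermiteFun hj x).mul (hasDerivAt_hermiteFun hl x)).sub
    ((hasDerivAt_hermiteFun hj x).mul (hasDerivAt_deriv_hermiteFun hl x))).congr_deriv ?_
  ring

noncomputable def oscWeight (μ k x : ℝ) : ℂ :=
  (Real.sqrt (1 + x ^ 2) ^ μ : ℝ) * Complex.exp (Complex.I * k * x)

lemma osc_eq_oscWeight_mul (μ k : ℝ) (m n : ℕ) (x : ℝ) :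
    osc μ k m n x = oscWeight μ k x * (hermiteFun m x * hermiteFun n x : ℝ) := by
  rw [osc, oscWeight]; push_cast; ring

lemma sqrt_one_add_sq_rpow (μ x : ℝ) : Real.sqrt (1 + x ^ 2) ^ μ = (1 + x ^ 2) ^ (μ / 2) := by
  rw [Real.sqrt_eq_rpow, ← Real.rpow_mul (by positivity), one_div_mul_eq_div]

lemma norm_exp_I_mul_ofReal (k x : ℝ) : ‖Complex.exp (Complex.I * k * x)‖ = 1 := by
  rw [Complex.norm_exp]; simp

lemma norm_oscWeight (μ k x : ℝ) : ‖oscWeight μ k x‖ = Real.sqrt (1 + x ^ 2) ^ μ := by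
  rw [oscWeight, norm_mul, norm_exp_I_mul_ofReal, Complex.norm_real, Real.norm_eq_abs, mul_one,
    abs_of_nonneg (Real.rpow_nonneg (Real.sqrt_nonneg _) μ)]

lemma hasDerivAt_oscWeight (μ k x : ℝ) : HasDerivAt (oscWeight μ k)
    (((μ * x * (1 + x ^ 2) ^ (μ / 2 - 1) : ℝ) + (Real.sqrt (1 + x ^ 2) ^ μ : ℝ) * (Complex.I * k)) *
      Complex.exp (Complex.I * k * x)) x := by
  have hbase : HasDerivAt (fun y : ℝ => 1 + y ^ 2) (2 * x) x :=
    ((hasDerivAt_pow 2 x).const_add 1).congr_deriv (by push_cast; ring)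
  have hpow : HasDerivAt (fun y : ℝ => Real.sqrt (1 + y ^ 2) ^ μ)
      (μ * x * (1 + x ^ 2) ^ (μ / 2 - 1)) x := by
    simp_rw [sqrt_one_add_sq_rpow]
    exact (hbase.rpow_const (Or.inl (by positivity))).congr_deriv (by ring)
  have hexp : HasDerivAt (fun y : ℝ => Complex.exp (Complex.I * k * y))
      (Complex.I * k * Complex.exp (Complex.I * k * x)) x := by
    have := ((hasDerivAt_id x).ofReal_comp.const_mul (Complex.I * k)).cexp
    exact this.congr_deriv (by simp; ring)
  exact (hpow.ofReal_comp.mul hexp).congr_deriv (by push_cast; ring)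

lemma continuous_deriv_oscWeight (μ k : ℝ) : Continuous (deriv (oscWeight μ k)) := by
  rw [show deriv (oscWeight μ k) = _ from funext fun x => (hasDerivAt_oscWeight μ k x).deriv]
  have h1 : Continuous fun x : ℝ => (1 + x ^ 2) ^ (μ / 2 - 1) :=
    (continuous_const.add (continuous_pow 2)).rpow_const fun x =>
      Or.inl (by show (1 : ℝ) + x ^ 2 ≠ 0; positivity)
  have h2 : Continuous fun x : ℝ => Real.sqrt (1 + x ^ 2) ^ μ :=
    ((continuous_const.add (continuous_pow 2)).sqrt).rpow_const fun x =>
      Or.inl (Real.sqrt_pos.2 (by show (0 : ℝ) < 1 + x ^ 2; positivity)).ne'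
  fun_prop

lemma norm_deriv_oscWeight_le (μ k x : ℝ) :
    ‖deriv (oscWeight μ k) x‖ ≤ (|μ| + |k|) * Real.sqrt (1 + x ^ 2) ^ μ := by
  have hpos : 0 < 1 + x ^ 2 := by positivity
  have hx : |x| ≤ 1 + x ^ 2 := by nlinarith [abs_nonneg x, sq_abs x, sq_nonneg (|x| - 1)]
  have hμx : |μ * x * (1 + x ^ 2) ^ (μ / 2 - 1)| ≤ |μ| * Real.sqrt (1 + x ^ 2) ^ μ := by
    rw [sqrt_one_add_sq_rpow, Real.rpow_sub_one hpos.ne', abs_mul, abs_mul,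
      abs_of_pos (div_pos (Real.rpow_pos_of_pos hpos _) hpos), mul_assoc,
      mul_div_assoc']
    gcongr
    rw [div_le_iff₀ hpos]
    nlinarith [Real.rpow_nonneg hpos.le (μ / 2)]
  rw [(hasDerivAt_oscWeight μ k x).deriv, norm_mul, norm_exp_I_mul_ofReal, mul_one]
  refine (norm_add_le _ _).trans ?_
  simp only [norm_mul, Complex.norm_real, Complex.norm_I, Real.norm_eq_abs, one_mul]
  rw [abs_of_nonneg (Real.rpow_nonneg (Real.sqrt_nonneg _) μ)]
  rw [abs_mul, abs_mul] at hμx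
  linarith

lemma mul_integral_osc_eq_wronskian {m n : ℕ} (hm : 1 ≤ m) (hn : 1 ≤ n) (μ k a b : ℝ) :
    ((Xpt n ^ 2 - Xpt m ^ 2 : ℝ) : ℂ) * ∫ x in a..b, osc μ k m n x =
      oscWeight μ k b * hermiteWronskian m n b - oscWeight μ k a * hermiteWronskian m n a -
        ∫ x in a..b, deriv (oscWeight μ k) x * hermiteWronskian m n x := by
  have hv : ∀ x, HasDerivAt (fun y => (hermiteWronskian m n y : ℂ))
      (((Xpt n ^ 2 - Xpt m ^ 2) * (hermiteFun m x * hermiteFun n x) : ℝ) : ℂ) x :=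
    fun x => (hasDerivAt_hermiteWronskian hm hn x).ofReal_comp
  have hv' : Continuous fun x =>
      (((Xpt n ^ 2 - Xpt m ^ 2) * (hermiteFun m x * hermiteFun n x) : ℝ) : ℂ) :=
    Complex.continuous_ofReal.comp
      (continuous_const.mul ((continuous_hermiteFun hm).mul (continuous_hermiteFun hn)))
  rw [← intervalIntegral.integral_mul_deriv_eq_deriv_mul
    (fun x _ => (hasDerivAt_oscWeight μ k x).differentiableAt.hasDerivAt) (fun x _ => hv x)
    ((continuous_deriv_oscWeight μ k).intervalIntegrable _ _) (hv'.intervalIntegrable _ _),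
    ← intervalIntegral.integral_const_mul]
  congr 1
  ext x
  rw [osc_eq_oscWeight_mul]
  push_cast; ring

/-! ### Bounds on `[0, X_m - X_m^{-1/3}]` -/

lemma intervalIntegrable_inv_sqrt_sub {X a b : ℝ} (hab : a ≤ b) (hbX : b < X) :
    IntervalIntegrable (fun x => (Real.sqrt (X - x))⁻¹) MeasureTheory.volume a b := by
  refine ContinuousOn.intervalIntegrable fun x hx => ?_
  rw [uIcc_of_le hab] at hx
  have hpos : 0 < X - x := by linarith [hx.2]
  exact ((continuous_const.sub continuous_id).sqrt.continuousAt.inv₀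
    (Real.sqrt_pos.2 hpos).ne').continuousWithinAt

lemma integral_inv_sqrt_sub {X a b : ℝ} (hab : a ≤ b) (hbX : b < X) :
    ∫ x in a..b, (Real.sqrt (X - x))⁻¹ = 2 * Real.sqrt (X - a) - 2 * Real.sqrt (X - b) := by
  have hderiv : ∀ x ∈ uIcc a b,
      HasDerivAt (fun y => -2 * Real.sqrt (X - y)) (Real.sqrt (X - x))⁻¹ x := fun x hx => by
    rw [uIcc_of_le hab] at hx
    have hpos : 0 < X - x := by linarith [hx.2]
    refine ((((hasDerivAt_id' x).const_sub X).sqrt hpos.ne').const_mul (-2)).congr_deriv ?_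
    have : Real.sqrt (X - x) ≠ 0 := (Real.sqrt_pos.2 hpos).ne'
    field_simp
  rw [intervalIntegral.integral_eq_sub_of_hasDerivAt hderiv
    (intervalIntegrable_inv_sqrt_sub hab hbX)]
  ring

lemma norm_integral_le_of_norm_le_inv_sqrt {E : Type*} [NormedAddCommGroup E] [NormedSpace ℝ E]
    {f : ℝ → E} {X T a b : ℝ} (hT : 0 ≤ T) (hTX : T < X) (ha : 0 ≤ a)
    (h : ∀ x ∈ Icc 0 T, ‖f x‖ ≤ a * (Real.sqrt (X - x))⁻¹ + b) :
    ‖∫ x in (0 : ℝ)..T, f x‖ ≤ 2 * a * Real.sqrt X + b * T := by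
  have hint := intervalIntegrable_inv_sqrt_sub hT hTX
  calc ‖∫ x in (0 : ℝ)..T, f x‖ ≤ ∫ x in (0 : ℝ)..T, (a * (Real.sqrt (X - x))⁻¹ + b) :=
        intervalIntegral.norm_integral_le_of_norm_le hT
          (Filter.Eventually.of_forall fun x hx => h x (Ioc_subset_Icc_self hx))
          ((hint.const_mul a).add intervalIntegrable_const)
    _ = a * (2 * Real.sqrt X - 2 * Real.sqrt (X - T)) + b * T := by
        rw [intervalIntegral.integral_add (hint.const_mul a) intervalIntegrable_const,
          intervalIntegral.integral_const_mul, integral_inv_sqrt_sub hT hTX,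
          intervalIntegral.integral_const, sub_zero, sub_zero, smul_eq_mul, mul_comm T]
    _ ≤ 2 * a * Real.sqrt X + b * T := by nlinarith [Real.sqrt_nonneg (X - T)]

lemma sub_rpow_neg_third_nonneg {X : ℝ} (hX : 1 ≤ X) : 0 ≤ X - X ^ (-(1 : ℝ) / 3) := by
  linarith [Real.rpow_le_one_of_one_le_of_nonpos hX (by norm_num : -(1 : ℝ) / 3 ≤ 0)]

lemma sub_rpow_neg_third_lt {X : ℝ} (hX : 0 < X) : X - X ^ (-(1 : ℝ) / 3) < X := by
  linarith [Real.rpow_pos_of_pos hX (-(1 : ℝ) / 3)]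

lemma inv_sqrt_sub_le_sqrt {X x : ℝ} (hX : 1 ≤ X) (hx : x ≤ X - X ^ (-(1 : ℝ) / 3)) :
    (Real.sqrt (X - x))⁻¹ ≤ Real.sqrt X := by
  have hX0 : 0 < X := by linarith
  have hgap : X⁻¹ ≤ X - x := by
    calc X⁻¹ = X ^ (-(1 : ℝ)) := (Real.rpow_neg_one X).symm
      _ ≤ X ^ (-(1 : ℝ) / 3) := Real.rpow_le_rpow_of_exponent_le hX (by norm_num)
      _ ≤ X - x := by linarith
  rw [← Real.sqrt_inv]
  exact Real.sqrt_le_sqrt ((inv_le_comm₀ (by linarith [inv_pos.2 hX0]) hX0).2 hgap)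

section Estimates

variable {μ k : ℝ} {m n : ℕ}

lemma norm_oscWeight_le (hμ : 0 ≤ μ) (hm : 1 ≤ m) {x : ℝ} (hx : 0 ≤ x) (hxX : x ≤ Xpt m) :
    ‖oscWeight μ k x‖ ≤ (2 * m : ℝ) ^ (μ / 2) := by
  rw [norm_oscWeight, sqrt_one_add_sq_rpow]
  have : x ^ 2 ≤ Xpt m ^ 2 := pow_le_pow_left₀ hx hxX 2
  rw [Xpt_sq hm] at this
  exact Real.rpow_le_rpow (by positivity) (by linarith) (by linarith)

lemma abs_hermiteWronskian_le (hm : 1 ≤ m) (hn : 1 ≤ n) (hXY : 2 * Xpt m ≤ Xpt n) {x : ℝ}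
    (hx : 0 ≤ x) (hxX : x < Xpt m) :
    |hermiteWronskian m n x| ≤ 8 * Real.sqrt (Xpt m) * (Real.sqrt (Xpt n))⁻¹ +
      4 * Real.sqrt (Xpt n) * (Real.sqrt (Xpt m - x))⁻¹ := by
  have hdm := abs_deriv_hermiteFun_le hm hx hxX.le
  have hn0 := abs_hermiteFun_le_of_two_mul_le hn hx (by linarith)
  have hm0 := abs_hermiteFun_le_inv_sqrt hm hx hxX
  have hdn := abs_deriv_hermiteFun_le hn hx (by linarith [one_le_Xpt hm])
  calc |hermiteWronskian m n x|
      ≤ |deriv (hermiteFun m) x| * |hermiteFun n x| +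
        |hermiteFun m x| * |deriv (hermiteFun n) x| := by
        rw [hermiteWronskian, ← abs_mul, ← abs_mul]; exact abs_sub _ _
    _ ≤ (2 * Real.sqrt (Xpt m)) * (4 * (Real.sqrt (Xpt n))⁻¹) +
        (2 * (Real.sqrt (Xpt m - x))⁻¹) * (2 * Real.sqrt (Xpt n)) := by
        gcongr
    _ = _ := by ring

lemma norm_integral_osc_le (hμ : 0 ≤ μ) (hm : 1 ≤ m) (hn : 1 ≤ n) (hXY : 2 * Xpt m ≤ Xpt n) :
    ‖∫ x in (0 : ℝ)..(Xpt m - Xpt m ^ (-(1 : ℝ) / 3)), osc μ k m n x‖ ≤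
      16 * (2 * m : ℝ) ^ (μ / 2) * Real.sqrt (Xpt m) * (Real.sqrt (Xpt n))⁻¹ := by
  have hX := one_le_Xpt hm
  have hT := sub_rpow_neg_third_lt (by linarith : 0 < Xpt m)
  have h := norm_integral_le_of_norm_le_inv_sqrt (sub_rpow_neg_third_nonneg hX) hT
    (a := 8 * (2 * m : ℝ) ^ (μ / 2) * (Real.sqrt (Xpt n))⁻¹) (b := 0) (by positivity)
    (f := osc μ k m n) fun x hx => ?_
  · linarith
  have hxX : x < Xpt m := hx.2.trans_lt hT
  rw [osc_eq_oscWeight_mul, norm_mul, Complex.norm_real, Real.norm_eq_abs, abs_mul]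
  calc ‖oscWeight μ k x‖ * (|hermiteFun m x| * |hermiteFun n x|)
      ≤ (2 * m : ℝ) ^ (μ / 2) *
        ((2 * (Real.sqrt (Xpt m - x))⁻¹) * (4 * (Real.sqrt (Xpt n))⁻¹)) := by
        gcongr
        · exact norm_oscWeight_le hμ hm hx.1 hxX.le
        · exact abs_hermiteFun_le_inv_sqrt hm hx.1 hxX
        · exact abs_hermiteFun_le_of_two_mul_le hn hx.1 (by linarith)
    _ = _ := by ring

lemma abs_hermiteWronskian_le_sqrt_mul_sqrt (hm : 1 ≤ m) (hn : 1 ≤ n) (hXY : 2 * Xpt m ≤ Xpt n)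
    {x : ℝ} (hx : x ∈ Icc 0 (Xpt m - Xpt m ^ (-(1 : ℝ) / 3))) :
    |hermiteWronskian m n x| ≤ 12 * Real.sqrt (Xpt m) * Real.sqrt (Xpt n) := by
  have hX := one_le_Xpt hm
  have hY : 1 ≤ Real.sqrt (Xpt n) := Real.one_le_sqrt.2 (by linarith)
  have hYinv : (Real.sqrt (Xpt n))⁻¹ ≤ Real.sqrt (Xpt n) := (inv_le_one_of_one_le₀ hY).trans hY
  have hW := abs_hermiteWronskian_le hm hn hXY hx.1
    (hx.2.trans_lt (sub_rpow_neg_third_lt (by linarith)))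
  have hXx := inv_sqrt_sub_le_sqrt hX hx.2
  calc |hermiteWronskian m n x|
      ≤ 8 * Real.sqrt (Xpt m) * Real.sqrt (Xpt n) + 4 * Real.sqrt (Xpt n) * Real.sqrt (Xpt m) := by
        refine hW.trans ?_
        gcongr
    _ = _ := by ring

lemma norm_integral_deriv_oscWeight_mul_wronskian_le (hμ : 0 ≤ μ) (hm : 1 ≤ m) (hn : 1 ≤ n)
    (hXY : 2 * Xpt m ≤ Xpt n) :
    ‖∫ x in (0 : ℝ)..(Xpt m - Xpt m ^ (-(1 : ℝ) / 3)),
        deriv (oscWeight μ k) x * hermiteWronskian m n x‖ ≤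
      12 * (μ + |k|) * (2 * m : ℝ) ^ (μ / 2) * Real.sqrt (Xpt m) * Real.sqrt (Xpt n) := by
  have hX := one_le_Xpt hm
  have hT := sub_rpow_neg_third_lt (by linarith : 0 < Xpt m)
  set c := (μ + |k|) * (2 * m : ℝ) ^ (μ / 2)
  have hc : 0 ≤ c := by positivity
  have h := norm_integral_le_of_norm_le_inv_sqrt (sub_rpow_neg_third_nonneg hX) hT
    (a := 4 * c * Real.sqrt (Xpt n)) (b := 8 * c * Real.sqrt (Xpt m) * (Real.sqrt (Xpt n))⁻¹)
    (by positivity) (f := fun x => deriv (oscWeight μ k) x * hermiteWronskian m n x)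
    fun x hx => ?_
  · have hYpos : 0 < Real.sqrt (Xpt n) := Real.sqrt_pos.2 (by linarith)
    have hTY : (Real.sqrt (Xpt n))⁻¹ * (Xpt m - Xpt m ^ (-(1 : ℝ) / 3)) ≤
        Real.sqrt (Xpt n) / 2 := by
      rw [inv_mul_le_iff₀ hYpos, ← mul_div_assoc, Real.mul_self_sqrt (by linarith)]
      linarith
    have := mul_le_mul_of_nonneg_left hTY (by positivity : 0 ≤ 8 * c * Real.sqrt (Xpt m))
    linarith
  have hxX : x < Xpt m := hx.2.trans_lt hT
  have hw : ‖deriv (oscWeight μ k) x‖ ≤ c := by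
    refine (norm_deriv_oscWeight_le μ k x).trans ?_
    rw [abs_of_nonneg hμ, ← norm_oscWeight μ k]
    exact mul_le_mul_of_nonneg_left (norm_oscWeight_le hμ hm hx.1 hxX.le) (by positivity)
  rw [norm_mul, Complex.norm_real, Real.norm_eq_abs]
  calc ‖deriv (oscWeight μ k) x‖ * |hermiteWronskian m n x|
      ≤ c * (8 * Real.sqrt (Xpt m) * (Real.sqrt (Xpt n))⁻¹ +
        4 * Real.sqrt (Xpt n) * (Real.sqrt (Xpt m - x))⁻¹) :=
        mul_le_mul hw (abs_hermiteWronskian_le hm hn hXY hx.1 hxX) (abs_nonneg _) hc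
    _ = _ := by ring

lemma Xpt_sq_mul_norm_integral_osc_le (hμ : 0 ≤ μ) (hm : 1 ≤ m) (hn : 1 ≤ n)
    (hXY : 2 * Xpt m ≤ Xpt n) :
    Xpt n ^ 2 * ‖∫ x in (0 : ℝ)..(Xpt m - Xpt m ^ (-(1 : ℝ) / 3)), osc μ k m n x‖ ≤
      32 * (1 + μ + |k|) * (2 * m : ℝ) ^ (μ / 2) * Real.sqrt (Xpt m) * Real.sqrt (Xpt n) := by
  have hderiv := norm_integral_deriv_oscWeight_mul_wronskian_le (k := k) hμ hm hn hXY
  set T := Xpt m - Xpt m ^ (-(1 : ℝ) / 3)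
  set ρ := (2 * m : ℝ) ^ (μ / 2)
  have hX := one_le_Xpt hm
  have hT0 : 0 ≤ T := sub_rpow_neg_third_nonneg hX
  have hTX : T < Xpt m := sub_rpow_neg_third_lt (by linarith)
  have hboundary : ∀ x ∈ Icc 0 T, ‖oscWeight μ k x * hermiteWronskian m n x‖ ≤
      ρ * (12 * Real.sqrt (Xpt m) * Real.sqrt (Xpt n)) := fun x hx => by
    rw [norm_mul, Complex.norm_real, Real.norm_eq_abs]
    exact mul_le_mul (norm_oscWeight_le hμ hm hx.1 (hx.2.trans hTX.le))
      (abs_hermiteWronskian_le_sqrt_mul_sqrt hm hn hXY hx) (abs_nonneg _) (by positivity)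
  have hgap : (Xpt n ^ 2 - Xpt m ^ 2) * ‖∫ x in (0 : ℝ)..T, osc μ k m n x‖ ≤
      24 * (1 + μ + |k|) * ρ * Real.sqrt (Xpt m) * Real.sqrt (Xpt n) := by
    rw [← abs_of_nonneg (by nlinarith : 0 ≤ Xpt n ^ 2 - Xpt m ^ 2), ← Real.norm_eq_abs,
      ← Complex.norm_real, ← norm_mul, mul_integral_osc_eq_wronskian hm hn]
    have htri := norm_sub_le (oscWeight μ k T * hermiteWronskian m n T)
      (oscWeight μ k 0 * hermiteWronskian m n 0)
    refine (norm_sub_le _ _).trans ?_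
    have hbT := hboundary T ⟨hT0, le_rfl⟩
    have hb0 := hboundary 0 ⟨le_rfl, hT0⟩
    have hpos : 0 ≤ ρ * Real.sqrt (Xpt m) * Real.sqrt (Xpt n) := by positivity
    have hpos' : 0 ≤ (μ + |k|) * (ρ * Real.sqrt (Xpt m) * Real.sqrt (Xpt n)) := by positivity
    linarith
  have hXY2 : 4 * Xpt m ^ 2 ≤ Xpt n ^ 2 := by nlinarith
  nlinarith [mul_le_mul_of_nonneg_right hXY2 (norm_nonneg (∫ x in (0 : ℝ)..T, osc μ k m n x))]

lemma norm_integral_osc_sq_mul_Xpt_sq_le (hμ : 0 ≤ μ) (hm : 1 ≤ m) (hn : 1 ≤ n)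
    (hXY : 2 * Xpt m ≤ Xpt n) :
    ‖∫ x in (0 : ℝ)..(Xpt m - Xpt m ^ (-(1 : ℝ) / 3)), osc μ k m n x‖ ^ 2 * Xpt n ^ 2 ≤
      512 * (1 + μ + |k|) * (2 * m : ℝ) ^ μ * Xpt m := by
  have hA := norm_integral_osc_le (k := k) hμ hm hn hXY
  have hB := Xpt_sq_mul_norm_integral_osc_le (k := k) hμ hm hn hXY
  have hX : 0 ≤ Xpt m := Real.sqrt_nonneg _
  have hY : 0 < Real.sqrt (Xpt n) := Real.sqrt_pos.2 (by linarith [one_le_Xpt hm])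
  have hρ : ((2 * m : ℝ) ^ (μ / 2)) ^ 2 = (2 * m : ℝ) ^ μ := by
    rw [← Real.rpow_natCast, ← Real.rpow_mul (by positivity)]; ring_nf
  calc _ = ‖∫ x in (0 : ℝ)..(Xpt m - Xpt m ^ (-(1 : ℝ) / 3)), osc μ k m n x‖ *
        (Xpt n ^ 2 * ‖∫ x in (0 : ℝ)..(Xpt m - Xpt m ^ (-(1 : ℝ) / 3)), osc μ k m n x‖) := by ring
    _ ≤ (16 * (2 * m : ℝ) ^ (μ / 2) * Real.sqrt (Xpt m) * (Real.sqrt (Xpt n))⁻¹) *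
        (32 * (1 + μ + |k|) * (2 * m : ℝ) ^ (μ / 2) * Real.sqrt (Xpt m) * Real.sqrt (Xpt n)) :=
        mul_le_mul hA hB (by positivity) (by positivity)
    _ = 512 * (1 + μ + |k|) * ((2 * m : ℝ) ^ (μ / 2)) ^ 2 * Real.sqrt (Xpt m) ^ 2 *
        ((Real.sqrt (Xpt n))⁻¹ * Real.sqrt (Xpt n)) := by ring
    _ = _ := by rw [inv_mul_cancel₀ hY.ne', Real.sq_sqrt hX, hρ, mul_one]

end Estimates

lemma rpow_add_half_le_mul_sq {μ m n : ℝ} (hμ : 0 ≤ μ) (hm : 0 < m) (hmn : m ≤ n) :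
    m ^ (μ + 1 / 2) ≤ n * (m ^ (-(1 / 8 - μ / 4)) * n ^ (-(1 / 8 - μ / 4))) ^ 2 := by
  have hn : 0 < n := hm.trans_le hmn
  have hsq : ∀ x : ℝ, 0 < x → (x ^ (-(1 / 8 - μ / 4))) ^ 2 = x ^ (μ / 2 - 1 / 4) := fun x hx => by
    rw [← Real.rpow_natCast, ← Real.rpow_mul hx.le]; ring_nf
  rw [mul_pow, hsq m hm, hsq n hn, show μ + 1 / 2 = (μ / 2 - 1 / 4) + (μ / 2 + 3 / 4) by ring,
    Real.rpow_add hm, mul_left_comm, ← Real.rpow_one_add' hn.le (by linarith),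
    show 1 + (μ / 2 - 1 / 4) = μ / 2 + 3 / 4 by ring]
  exact mul_le_mul_of_nonneg_left (Real.rpow_le_rpow hm.le hmn (by linarith)) (by positivity)

lemma le_of_sq_mul_Xpt_sq_le {μ k a : ℝ} {m n : ℕ} (hμ : 0 ≤ μ) (hm : 1 ≤ m) (hmn : m ≤ n)
    (h : a ^ 2 * Xpt n ^ 2 ≤ 512 * (1 + μ + |k|) * (2 * m : ℝ) ^ μ * Xpt m) :
    a ≤ 32 * (2 + μ) * 2 ^ μ * (max |k| 1) ^ ((1 : ℝ) / 2) *
      (m : ℝ) ^ (-(1 / 8 - μ / 4)) * (n : ℝ) ^ (-(1 / 8 - μ / 4)) := by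
  set K := max |k| 1
  set P := (m : ℝ) ^ (-(1 / 8 - μ / 4)) * (n : ℝ) ^ (-(1 / 8 - μ / 4)) with hP
  set c := (2 + μ) * (2 : ℝ) ^ μ with hc_def
  have hmR : (1 : ℝ) ≤ m := by exact_mod_cast hm
  have hmnR : (m : ℝ) ≤ n := by exact_mod_cast hmn
  have hK : 1 ≤ K := le_max_right _ _
  have hc : 1 ≤ c := one_le_mul_of_one_le_of_one_le (by linarith) (Real.one_le_rpow one_le_two hμ)
  have hkK : 1 + μ + |k| ≤ (2 + μ) * K := by nlinarith [le_max_left |k| 1]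
  have hX0 : 0 ≤ Xpt m := Real.sqrt_nonneg _
  have hX : Xpt m ≤ 2 * Real.sqrt m := by
    rw [Xpt, show 2 * Real.sqrt m = Real.sqrt (2 ^ 2 * m) by
      rw [Real.sqrt_mul (by norm_num), Real.sqrt_sq zero_le_two]]
    exact Real.sqrt_le_sqrt (by linarith)
  have hY : (n : ℝ) ≤ Xpt n ^ 2 := by rw [Xpt_sq (hm.trans hmn)]; linarith
  have hmμ : (2 * m : ℝ) ^ μ * (2 * Real.sqrt m) = 2 * 2 ^ μ * (m : ℝ) ^ (μ + 1 / 2) := by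
    rw [Real.mul_rpow zero_le_two (by positivity), Real.rpow_add (by positivity),
      Real.sqrt_eq_rpow]; ring
  have hsq : a ^ 2 * n ≤ (1024 * c * K * P ^ 2) * n := by
    calc a ^ 2 * n ≤ a ^ 2 * Xpt n ^ 2 := by gcongr
      _ ≤ 512 * ((2 + μ) * K) * ((2 * m : ℝ) ^ μ * (2 * Real.sqrt m)) := by
          refine h.trans ?_
          rw [← mul_assoc]
          gcongr
      _ = 1024 * c * K * (m : ℝ) ^ (μ + 1 / 2) := by rw [hmμ]; ring
      _ ≤ 1024 * c * K * (n * P ^ 2) := by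
          gcongr; exact rpow_add_half_le_mul_sq hμ (by positivity) hmnR
      _ = _ := by ring
  have hKsq : (K ^ ((1 : ℝ) / 2)) ^ 2 = K := by
    rw [← Real.rpow_natCast, ← Real.rpow_mul (by positivity)]; norm_num
  refine le_of_sq_le_sq ?_ (by positivity)
  calc a ^ 2 ≤ 1024 * c * K * P ^ 2 := le_of_mul_le_mul_right hsq (by linarith)
    _ ≤ 1024 * c ^ 2 * K * P ^ 2 := by gcongr; nlinarith
    _ = (32 * c * K ^ ((1 : ℝ) / 2) * P) ^ 2 := by
        rw [show (32 * c * K ^ ((1 : ℝ) / 2) * P) ^ 2 =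
          1024 * c ^ 2 * (K ^ ((1 : ℝ) / 2)) ^ 2 * P ^ 2 by ring, hKsq]
    _ = _ := by rw [hP, hc_def]; ring

theorem hermite_oscillatory_zero_inner_general (μ : ℝ) (hμ0 : 0 ≤ μ) :
    ∃ C : ℝ, 0 < C ∧ ∃ m₀ : ℕ, 1 ≤ m₀ ∧ ∀ m n : ℕ, m₀ < m → m ≤ n →
      2 * Xpt m ≤ Xpt n → ∀ k : ℝ, k ≠ 0 →
      ‖∫ x in (0 : ℝ)..(Xpt m - (Xpt m) ^ (-(1 : ℝ) / 3)), osc μ k m n x‖ ≤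
        C * (max |k| 1) ^ ((1 : ℝ) / 2) *
          (m : ℝ) ^ (-(1 / 8 - μ / 4)) * (n : ℝ) ^ (-(1 / 8 - μ / 4)) := by
  refine ⟨32 * (2 + μ) * 2 ^ μ, by positivity, 1, le_rfl, fun m n hm hmn hXY k _ => ?_⟩
  have hm1 : 1 ≤ m := hm.le
  exact le_of_sq_mul_Xpt_sq_le hμ0 hm1 hmn
    (norm_integral_osc_sq_mul_Xpt_sq_le hμ0 hm1 (hm1.trans hmn) hXY)

/-- estimate on `[0, X_m - X_m^{-1/3}]` when `X_n ≥ 2X_m`. -/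
theorem hermite_oscillatory_zero_inner (μ : ℝ) (hμ0 : 0 ≤ μ) (hμ1 : μ < 1 / 3) :
    ∃ C : ℝ, 0 < C ∧ ∃ m₀ : ℕ, 1 ≤ m₀ ∧ ∀ m n : ℕ, m₀ < m → m ≤ n →
      2 * Xpt m ≤ Xpt n → ∀ k : ℝ, k ≠ 0 →
      ‖∫ x in (0 : ℝ)..(Xpt m - (Xpt m) ^ (-(1 : ℝ) / 3)), osc μ k m n x‖ ≤
        C * (max |k| 1) ^ ((1 : ℝ) / 2) *
          (m : ℝ) ^ (-(1 / 8 - μ / 4)) * (n : ℝ) ^ (-(1 / 8 - μ / 4)) :=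
  hermite_oscillatory_zero_inner_general μ hμ0
end

section
/- For every integer n ≥ 1 there is a constant c(n) > 0 such that for all real K > 0 and all κ with 0 < κ < 1/4, the set D' = {ω ∈ [0,2π]^n : |⟨k,ω⟩ + j| ≥ κ(1+|j|) for every integer j ∈ ℤ and every k ∈ ℤ^n \ {0} with |k| ≤ K} satisfies Meas([0,2π]^n \ D') ≤ c(n) · K^{n+1} · κ, where Meas denotes n-dimensional Lebesgue measure. -/
open Real MeasureTheory intervalIntegral

/-!
The complement of `D'` in the cube is covered by the resonance slabs
`{ω : |⟨k, ω⟩ + j| < κ (1 + |j|)}` with `0 < |k| ≤ K`, and such a slab misses the cube unless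
`|j| ≤ 9 |k|`. Integrating first in a coordinate `i` with `|k i| ≥ |k| / n`, a slab meets the cube
in volume at most `(2π)^(n-1) · 2κ(1 + |j|) / |k i| ≤ 20 n κ (2π)^(n-1)`. There are at most
`(3K)^n` frequencies `k`, each with at most `19 K` admissible `j`.
-/

theorem volume_setOf_abs_mul_add_lt {a : ℝ} (ha : a ≠ 0) (c ε : ℝ) :
    volume {y : ℝ | |a * y + c| < ε} = ENNReal.ofReal (2 * ε / |a|) := by
  have : {y : ℝ | |a * y + c| < ε} = (a * ·) ⁻¹' Metric.ball (-c) ε := by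
    ext y; simp [Real.dist_eq, sub_neg_eq_add]
  rw [this, Real.volume_preimage_mul_left ha, Real.volume_ball,
    ← ENNReal.ofReal_mul (abs_nonneg _), abs_inv, inv_mul_eq_div]

theorem volume_pi_inter_setOf_abs_sum_mul_add_lt_le {m : ℕ} {s : Fin (m + 1) → Set ℝ}
    (hs : ∀ l, MeasurableSet (s l)) (a : Fin (m + 1) → ℝ) {i : Fin (m + 1)} (ha : a i ≠ 0)
    (b ε : ℝ) :
    volume (Set.pi Set.univ s ∩ {ω | |∑ l, a l * ω l + b| < ε}) ≤
      (∏ l : Fin m, volume (s (i.succAbove l))) * ENNReal.ofReal (2 * ε / |a i|) := by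
  set S := Set.pi Set.univ s ∩ {ω : Fin (m + 1) → ℝ | |∑ l, a l * ω l + b| < ε}
  have hS : MeasurableSet S :=
    (MeasurableSet.univ_pi hs).inter (measurableSet_lt (by fun_prop) measurable_const)
  let e := MeasurableEquiv.piFinSuccAbove (fun _ : Fin (m + 1) => ℝ) i
  have hslice (z : Fin m → ℝ) : volume ((fun y => (y, z)) ⁻¹' (e.symm ⁻¹' S)) ≤
      (Set.pi Set.univ fun l => s (i.succAbove l)).indicator
        (fun _ => ENNReal.ofReal (2 * ε / |a i|)) z := by
    by_cases hz : z ∈ Set.pi Set.univ fun l => s (i.succAbove l)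
    · rw [Set.indicator_of_mem hz,
        ← volume_setOf_abs_mul_add_lt ha (∑ l, a (i.succAbove l) * z l + b)]
      refine measure_mono fun y hy => ?_
      simpa [S, e, Fin.sum_univ_succAbove _ i, add_assoc] using hy.2
    · rw [Set.indicator_of_notMem hz]
      have hempty : (fun y => (y, z)) ⁻¹' (e.symm ⁻¹' S) = ∅ :=
        Set.eq_empty_of_forall_notMem fun y hy =>
          hz fun l _ => by simpa [S, e] using hy.1 (i.succAbove l) trivial
      rw [hempty, measure_empty]
  calc volume S = volume (e.symm ⁻¹' S) :=
        ((volume_preserving_piFinSuccAbove _ i).symm.measure_preimage hS.nullMeasurableSet).symm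
    _ = ∫⁻ z, volume ((fun y => (y, z)) ⁻¹' (e.symm ⁻¹' S)) :=
        Measure.prod_apply_symm (e.symm.measurable hS)
    _ ≤ _ := lintegral_mono hslice
    _ = _ := by
      rw [lintegral_indicator_const (MeasurableSet.univ_pi fun l => hs _), volume_pi_pi, mul_comm]

theorem one_le_sum_abs_of_ne_zero {ι : Type*} [Fintype ι] {k : ι → ℤ} (hk : k ≠ 0) :
    1 ≤ ∑ i, |k i| := by
  obtain ⟨i, hi⟩ := Function.ne_iff.mp hk
  exact (Int.one_le_abs hi).trans
    (Finset.single_le_sum (fun i _ => abs_nonneg (k i)) (Finset.mem_univ i))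

theorem exists_sum_le_card_mul {ι : Type*} [Fintype ι] [Nonempty ι] (f : ι → ℝ) :
    ∃ i, ∑ l, f l ≤ Fintype.card ι * f i := by
  obtain ⟨i, -, hi⟩ := Finset.exists_max_image Finset.univ f Finset.univ_nonempty
  refine ⟨i, ?_⟩
  have := Finset.sum_le_card_nsmul Finset.univ f (f i) hi
  rwa [Finset.card_univ, nsmul_eq_mul] at this

theorem abs_sum_mul_le {ι : Type*} [Fintype ι] (a ω : ι → ℝ) {L : ℝ} (hω : ∀ i, |ω i| ≤ L) :
    |∑ i, a i * ω i| ≤ L * ∑ i, |a i| :=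
  calc |∑ i, a i * ω i| ≤ ∑ i, |a i * ω i| := Finset.abs_sum_le_sum_abs _ _
    _ ≤ ∑ i, |a i| * L := Finset.sum_le_sum fun i _ => by
        rw [abs_mul]; exact mul_le_mul_of_nonneg_left (hω i) (abs_nonneg _)
    _ = L * ∑ i, |a i| := by rw [← Finset.sum_mul, mul_comm]

theorem abs_le_nine_mul_of_abs_add_lt {x y S κ : ℝ} (hx : |x| ≤ 2 * π * S) (hS : 1 ≤ S)
    (hκ : κ ≤ 1 / 4) (h : |x + y| < κ * (1 + |y|)) : |y| ≤ 9 * S := by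
  have hy : |y| ≤ |x + y| + |x| := by simpa using abs_sub (x + y) x
  have hκy : κ * (1 + |y|) ≤ (1 + |y|) / 4 := by nlinarith [abs_nonneg y]
  nlinarith [pi_lt_d2]

def resonantSet {n : ℕ} (κ : ℝ) (k : Fin n → ℤ) (j : ℤ) : Set (Fin n → ℝ) :=
  {ω | |∑ i, (k i : ℝ) * ω i + j| < κ * (1 + |(j : ℝ)|)}

/-- The box `|k i| ≤ ⌊K⌋` follows from the `ℓ¹` bound; it only makes the set finite. -/
noncomputable def lowFrequencies (n : ℕ) (K : ℝ) : Finset (Fin n → ℤ) :=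
  (Fintype.piFinset fun _ => Finset.Icc (-⌊K⌋) ⌊K⌋).filter fun k => k ≠ 0 ∧ ∑ i, |k i| ≤ ⌊K⌋

noncomputable def resonantPairs (n : ℕ) (K : ℝ) : Finset (Σ _ : Fin n → ℤ, ℤ) :=
  (lowFrequencies n K).sigma fun k => Finset.Icc (-(9 * ∑ i, |k i|)) (9 * ∑ i, |k i|)

theorem card_lowFrequencies_le (n : ℕ) {K : ℝ} (hK : 1 ≤ K) :
    ((lowFrequencies n K).card : ℝ) ≤ (3 * K) ^ n := by
  have hfloor : 0 ≤ ⌊K⌋ := Int.floor_nonneg.mpr (by linarith)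
  calc ((lowFrequencies n K).card : ℝ)
      ≤ (Fintype.piFinset fun _ : Fin n => Finset.Icc (-⌊K⌋) ⌊K⌋).card := by
        exact_mod_cast Finset.card_filter_le _ _
    _ = (2 * ⌊K⌋ + 1 : ℝ) ^ n := by
        rw [Fintype.card_piFinset, Finset.prod_const, Finset.card_univ, Fintype.card_fin,
          Int.card_Icc, Nat.cast_pow, ← Int.cast_natCast, Int.toNat_of_nonneg (by omega)]
        push_cast; ring
    _ ≤ (3 * K) ^ n := by
        have : (0 : ℝ) ≤ ⌊K⌋ := by exact_mod_cast hfloor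
        gcongr; linarith [Int.floor_le K]

theorem card_resonantPairs_le (n : ℕ) {K : ℝ} (hK : 0 ≤ K) :
    ((resonantPairs n K).card : ℝ) ≤ (3 * K) ^ n * (19 * K) := by
  rw [resonantPairs, Finset.card_sigma, Nat.cast_sum]
  rcases (lowFrequencies n K).eq_empty_or_nonempty with h | ⟨k, hk⟩
  · rw [h, Finset.sum_empty]
    positivity
  have hK1 : 1 ≤ K := by
    obtain ⟨hk0, hkK⟩ := (Finset.mem_filter.mp hk).2
    exact_mod_cast Int.le_floor.mp ((one_le_sum_abs_of_ne_zero hk0).trans hkK)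
  have hcard (k) (hk : k ∈ lowFrequencies n K) :
      ((Finset.Icc (-(9 * ∑ i, |k i|)) (9 * ∑ i, |k i|)).card : ℝ) ≤ 19 * K := by
    obtain ⟨hk0, hkK⟩ := (Finset.mem_filter.mp hk).2
    have hS := one_le_sum_abs_of_ne_zero hk0
    have : ((Finset.Icc (-(9 * ∑ i, |k i|)) (9 * ∑ i, |k i|)).card : ℤ) ≤ 19 * ⌊K⌋ := by
      rw [Int.card_Icc, Int.toNat_of_nonneg (by omega)]
      omega
    calc _ ≤ (19 * ⌊K⌋ : ℝ) := by exact_mod_cast this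
      _ ≤ 19 * K := by linarith [Int.floor_le K]
  calc ∑ k ∈ lowFrequencies n K, ((Finset.Icc (-(9 * ∑ i, |k i|)) (9 * ∑ i, |k i|)).card : ℝ)
      ≤ (lowFrequencies n K).card * (19 * K) := by
        simpa using Finset.sum_le_card_nsmul _ _ _ hcard
    _ ≤ (3 * K) ^ n * (19 * K) := by
        gcongr; exact card_lowFrequencies_le n hK1

theorem volume_cube_inter_resonantSet_le {m : ℕ} {K κ : ℝ} (hκ : 0 ≤ κ)
    {p : Σ _ : Fin (m + 1) → ℤ, ℤ} (hp : p ∈ resonantPairs (m + 1) K) :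
    volume ((Set.pi Set.univ fun _ : Fin (m + 1) => Set.Icc (0 : ℝ) (2 * π)) ∩
        resonantSet κ p.1 p.2) ≤
      ENNReal.ofReal ((2 * π) ^ m * (20 * (m + 1) * κ)) := by
  obtain ⟨k, j⟩ := p
  obtain ⟨hk, hj⟩ := Finset.mem_sigma.mp hp
  have hS : (1 : ℝ) ≤ ∑ i, |(k i : ℝ)| := by
    exact_mod_cast one_le_sum_abs_of_ne_zero (Finset.mem_filter.mp hk).2.1
  have hj : |(j : ℝ)| ≤ 9 * ∑ i, |(k i : ℝ)| := by
    exact_mod_cast abs_le.mpr (Finset.mem_Icc.mp hj)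
  obtain ⟨i, hi⟩ := exists_sum_le_card_mul fun l => |(k l : ℝ)|
  rw [Fintype.card_fin, Nat.cast_add_one] at hi
  have hki : 0 < |(k i : ℝ)| := by nlinarith [abs_nonneg (k i : ℝ)]
  calc _ ≤ (∏ _l : Fin m, volume (Set.Icc (0 : ℝ) (2 * π))) *
        ENNReal.ofReal (2 * (κ * (1 + |(j : ℝ)|)) / |(k i : ℝ)|) :=
        volume_pi_inter_setOf_abs_sum_mul_add_lt_le (fun _ => measurableSet_Icc) _
          (abs_pos.mp hki) _ _
    _ ≤ ENNReal.ofReal ((2 * π) ^ m) * ENNReal.ofReal (20 * (m + 1) * κ) := by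
        rw [Real.volume_Icc, sub_zero, Finset.prod_const, Finset.card_univ, Fintype.card_fin,
          ENNReal.ofReal_pow (by positivity)]
        gcongr
        rw [div_le_iff₀ hki]
        nlinarith
    _ = _ := (ENNReal.ofReal_mul (by positivity)).symm

theorem cube_diff_subset_biUnion_resonantSet {n : ℕ} {K κ : ℝ} (hκ : κ ≤ 1 / 4) :
    (Set.pi Set.univ fun _ : Fin n => Set.Icc (0 : ℝ) (2 * π)) \
        {ω : Fin n → ℝ | ω ∈ (Set.pi Set.univ fun _ : Fin n => Set.Icc (0 : ℝ) (2 * π)) ∧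
          ∀ (j : ℤ) (k : Fin n → ℤ), k ≠ 0 → (∑ i, (|k i| : ℝ)) ≤ K →
            κ * (1 + |(j : ℝ)|) ≤ |(∑ i, (k i : ℝ) * ω i) + (j : ℝ)|} ⊆
      ⋃ p ∈ resonantPairs n K,
        (Set.pi Set.univ fun _ : Fin n => Set.Icc (0 : ℝ) (2 * π)) ∩ resonantSet κ p.1 p.2 := by
  rintro ω ⟨hω, hgood⟩
  obtain ⟨j, k, hk, hkK, hres⟩ : ∃ (j : ℤ) (k : Fin n → ℤ), k ≠ 0 ∧ ∑ i, |(k i : ℝ)| ≤ K ∧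
      |∑ i, (k i : ℝ) * ω i + j| < κ * (1 + |(j : ℝ)|) := by
    by_contra! h
    exact hgood ⟨hω, h⟩
  have hS := one_le_sum_abs_of_ne_zero hk
  have hkK : ∑ i, |k i| ≤ ⌊K⌋ := Int.le_floor.mpr (by push_cast; exact hkK)
  have hωi (i : Fin n) : |ω i| ≤ 2 * π := by
    obtain ⟨h0, h2π⟩ := hω i trivial
    exact abs_le.mpr ⟨by linarith [pi_pos], h2π⟩
  have hj : |(j : ℝ)| ≤ 9 * ∑ i, |(k i : ℝ)| :=
    abs_le_nine_mul_of_abs_add_lt (abs_sum_mul_le _ _ hωi) (by exact_mod_cast hS) hκ hres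
  refine Set.mem_iUnion₂.mpr ⟨⟨k, j⟩, ?_, hω, hres⟩
  simp only [resonantPairs, lowFrequencies, Finset.mem_sigma, Finset.mem_filter,
    Fintype.mem_piFinset, Finset.mem_Icc, ← abs_le]
  refine ⟨⟨fun i => ?_, hk, hkK⟩, by exact_mod_cast hj⟩
  exact (Finset.single_le_sum (fun i _ => abs_nonneg (k i)) (Finset.mem_univ i)).trans hkK

/-- measure estimate for the second Melnikov condition. -/
theorem melnikov_measure_estimate (n : ℕ) (hn : 1 ≤ n) :
    ∃ c : ℝ, 0 < c ∧ ∀ K : ℝ, 0 < K → ∀ κ : ℝ, 0 < κ → κ < 1 / 4 →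
      volume ((Set.pi Set.univ fun _ : Fin n => Set.Icc (0 : ℝ) (2 * Real.pi)) \
        {ω : Fin n → ℝ |
          ω ∈ (Set.pi Set.univ fun _ : Fin n => Set.Icc (0 : ℝ) (2 * Real.pi)) ∧
          ∀ (j : ℤ) (k : Fin n → ℤ), k ≠ 0 → (∑ i, (|k i| : ℝ)) ≤ K →
            κ * (1 + |(j : ℝ)|) ≤ |(∑ i, (k i : ℝ) * ω i) + (j : ℝ)|}) ≤
        ENNReal.ofReal (c * K ^ (n + 1) * κ) := by
  obtain ⟨m, rfl⟩ : ∃ m, n = m + 1 := ⟨n - 1, by omega⟩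
  refine ⟨380 * (m + 1) * 3 ^ (m + 1) * (2 * π) ^ m, by positivity, fun K hK κ hκ hκ4 => ?_⟩
  set cube := Set.pi Set.univ fun _ : Fin (m + 1) => Set.Icc (0 : ℝ) (2 * π)
  set t := (2 * π) ^ m * (20 * (m + 1) * κ)
  calc _ ≤ volume (⋃ p ∈ resonantPairs (m + 1) K, cube ∩ resonantSet κ p.1 p.2) :=
        measure_mono (cube_diff_subset_biUnion_resonantSet hκ4.le)
    _ ≤ ∑ p ∈ resonantPairs (m + 1) K, volume (cube ∩ resonantSet κ p.1 p.2) :=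
        measure_biUnion_finset_le _ _
    _ ≤ (resonantPairs (m + 1) K).card • ENNReal.ofReal t :=
        Finset.sum_le_card_nsmul _ _ _ fun p hp => volume_cube_inter_resonantSet_le hκ.le hp
    _ = ENNReal.ofReal ((resonantPairs (m + 1) K).card * t) := by
        rw [nsmul_eq_mul, ENNReal.ofReal_mul (Nat.cast_nonneg _), ENNReal.ofReal_natCast]
    _ ≤ ENNReal.ofReal ((3 * K) ^ (m + 1) * (19 * K) * t) := by
        gcongr
        exact card_resonantPairs_le _ hK.le
    _ = _ := by
        congr 1
        ring
end
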